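/- arXiv:1804.10569 — 6 statements merged into one kernel-verified Lean document; each statement's English description precedes it below -/
import Mathlib

section
/- For every integer k ≥ 1, the identity ∑_{j=0}^{⌊(k-1)/2⌋} (k-2j)·C(k,j)² = k·C(k-1, ⌊(k-1)/2⌋)² holds. -/
lemma key_step (k i : ℕ) (h : 2 * (i + 1) ≤ k) :
    k * (Nat.choose (k-1) i) ^ 2 + (k - 2 * (i+1)) * (Nat.choose k (i+1)) ^ 2
      = k * (Nat.choose (k-1) (i+1)) ^ 2 := by
  obtain ⟨n, rfl⟩ : ∃ n, k = n + 1 := ⟨k - 1, by omega⟩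
  simp only [Nat.add_sub_cancel]
  have hp : Nat.choose (n+1) (i+1) = Nat.choose n i + Nat.choose n (i+1) :=
    Nat.choose_succ_succ n i
  have hm : (i + 1) * Nat.choose (n+1) (i+1) = (n+1) * Nat.choose n i := by
    simpa [Nat.succ_eq_add_one, mul_comm] using (Nat.add_one_mul_choose_eq n i).symm
  rw [hp] at hm ⊢
  zify [h] at hm ⊢
  linear_combination (-2 * ((Nat.choose n i : ℤ) + Nat.choose n (i+1))) * hm

lemma gen_sum (k : ℕ) (hk : 1 ≤ k) :
    ∀ m, 2 * m ≤ k →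
      ∑ j ∈ Finset.range (m + 1), (k - 2 * j) * (Nat.choose k j) ^ 2
        = k * (Nat.choose (k - 1) m) ^ 2 := by
  intro m
  induction m with
  | zero => simp
  | succ i ih =>
    intro h
    rw [Finset.sum_range_succ, ih (by omega)]
    exact key_step k i h

/-- For every integer `k ≥ 1`,
`∑_{j=0}^{⌊(k-1)/2⌋} (k-2j)·C(k,j)² = k·C(k-1, ⌊(k-1)/2⌋)²`. -/
theorem sum_binomial_identity (k : ℕ) (hk : 1 ≤ k) :
    ∑ j ∈ Finset.range ((k - 1) / 2 + 1), (k - 2 * j) * (Nat.choose k j) ^ 2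
      = k * (Nat.choose (k - 1) ((k - 1) / 2)) ^ 2 := by
  exact gen_sum k hk ((k-1)/2) (by omega)
end

section
/- For every integer p ≥ 1, setting k = 2p, the identity 8·∑_{j=0}^{p-1} j·(k-j)·C(k,j)² = 4k²·C(2k-2, k-2) − k²·C(k,p)² holds. -/
/-!
Since `j·C(k,j) = k·C(k-1,j-1)` and `(k-j)·C(k,j) = k·C(k-1,j)`, the summand equals
`k²·C(k-1,j-1)·C(k-1,j)`, so by Vandermonde the sum over all `0 ≤ j ≤ k` is `k²·C(2k-2,k)`.
The summand is invariant under `j ↦ k - j`, so that full sum is twice the sum over `j < p`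
plus the middle term `p²·C(k,p)²`.
-/

open Finset

theorem Nat.sum_range_choose_mul_choose_succ (m : ℕ) :
    ∑ i ∈ range (m + 1), m.choose i * m.choose (i + 1) = (2 * m).choose (m + 1) := by
  rw [two_mul, Nat.add_choose_eq, Nat.sum_antidiagonal_eq_sum_range_succ_mk,
    sum_range_succ' _ (m + 1)]
  simp only [Nat.sub_zero, Nat.choose_succ_self, mul_zero, add_zero]
  refine sum_congr rfl fun i hi => ?_
  have hi : i ≤ m := Nat.lt_succ_iff.mp (mem_range.mp hi)
  rw [mul_comm, Nat.choose_symm_of_eq_add (show m = m + 1 - (i + 1) + i by omega)]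

theorem add_one_mul_sub_mul_choose_add_one_sq (m i : ℕ) :
    ((i + 1 : ℕ) : ℤ) * ((m + 1 : ℕ) - (i + 1 : ℕ)) * ((m + 1).choose (i + 1) : ℤ) ^ 2
      = (m + 1) ^ 2 * m.choose i * m.choose (i + 1) := by
  have hsucc : ((m + 1 : ℕ) : ℤ) * m.choose i = (m + 1).choose (i + 1) * (i + 1 : ℕ) := by
    exact_mod_cast Nat.add_one_mul_choose_eq m i
  have hpascal : ((m + 1).choose (i + 1) : ℤ) = m.choose i + m.choose (i + 1) := by
    exact_mod_cast Nat.choose_succ_succ' m i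
  push_cast at *
  linear_combination ((m + 1) * (m.choose i : ℤ) - (m - i) * (m + 1).choose (i + 1)) * hsucc
    + (m + 1) ^ 2 * (m.choose i : ℤ) * hpascal

theorem sum_range_two_mul_add_one_of_symm {M : Type*} [AddCommMonoid M] (f : ℕ → M) (p : ℕ)
    (hf : ∀ j ≤ 2 * p, f (2 * p - j) = f j) :
    ∑ j ∈ range (2 * p + 1), f j = 2 • ∑ j ∈ range p, f j + f p := by
  rw [show 2 * p + 1 = p + 1 + p by omega, sum_range_add, sum_range_succ, ← sum_range_reflect f p,
    two_nsmul]
  have hreflect : ∀ j ∈ range p, f (p + 1 + j) = f (p - 1 - j) := fun j hj => by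
    have hj : j < p := mem_range.mp hj
    rw [← hf (p - 1 - j) (by omega)]
    congr 1
    omega
  rw [sum_congr rfl hreflect]
  abel

-- `C(2n-2, n)` rather than the symmetric `C(2n-2, n-2)`: with truncated subtraction the latter
-- would be `1` instead of `0` at `n = 1`.
theorem sum_range_mul_sub_mul_choose_sq (n : ℕ) :
    ∑ j ∈ range (n + 1), (j : ℤ) * (n - j) * (n.choose j : ℤ) ^ 2
      = n ^ 2 * (2 * n - 2).choose n := by
  cases n with
  | zero => simp
  | succ m =>
    rw [sum_range_succ', sum_congr rfl fun i _ => add_one_mul_sub_mul_choose_add_one_sq m i]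
    simp_rw [mul_assoc, ← mul_sum]
    rw [show 2 * (m + 1) - 2 = 2 * m by omega, ← Nat.sum_range_choose_mul_choose_succ]
    push_cast
    ring

/-- For every integer `p ≥ 1`, with `k = 2p`,
`8·∑_{j=0}^{p-1} j·(k-j)·C(k,j)² = 4k²·C(2k-2, k-2) − k²·C(k,p)²`. -/
theorem eight_mul_sum_j_mul_sq_choose_even (p : ℕ) (hp : 1 ≤ p) :
    8 * ∑ j ∈ Finset.range p,
        (j : ℤ) * (2 * (p : ℤ) - j) * (Nat.choose (2 * p) j : ℤ) ^ 2
      = 4 * (2 * (p : ℤ)) ^ 2 * (Nat.choose (2 * (2 * p) - 2) (2 * p - 2) : ℤ)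
        - (2 * (p : ℤ)) ^ 2 * (Nat.choose (2 * p) p : ℤ) ^ 2 := by
  have hsymm := sum_range_two_mul_add_one_of_symm
    (fun j => (j : ℤ) * (2 * (p : ℤ) - j) * (Nat.choose (2 * p) j : ℤ) ^ 2) p fun j hj => by
      simp only [Nat.cast_sub hj, Nat.choose_symm hj]
      push_cast
      ring
  have hfull := sum_range_mul_sub_mul_choose_sq (2 * p)
  push_cast at hfull
  rw [hsymm, Nat.choose_symm_of_eq_add (show 2 * (2 * p) - 2 = 2 * p + (2 * p - 2) by omega),
    two_nsmul] at hfull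
  linear_combination 4 * hfull
end

section
/- For every integer k ≥ 1 and every real number η, the derivative with respect to ξ, evaluated at ξ = 0, of the function ξ ↦ Im((cosh(ξ + iη))^k) + W_k(ξ,η) is equal to 0; that is, the sum of the explicit harmonic function W_k and the function Ψ_k(ξ,η) = Im((cosh(ξ+iη))^k) satisfies a homogeneous Neumann condition on the line ξ = 0. -/
/-- The profile `W_k` in elliptic coordinates:
`W_k(ξ,η) = 2^{1-k} · ∑_{j=0}^{⌊(k-1)/2⌋} C(k,j)·exp(−(k−2j)ξ)·sin((k−2j)η)`. -/
noncomputable def Wk (k : ℕ) (ξ η : ℝ) : ℝ :=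
  (2 : ℝ) ^ (1 - (k : ℤ)) *
    ∑ j ∈ Finset.range ((k - 1) / 2 + 1),
      (Nat.choose k j : ℝ) * Real.exp (-(((k : ℝ) - 2 * j)) * ξ) *
        Real.sin (((k : ℝ) - 2 * j) * η)

/-!
Expanding `cosh z = (e^z + e^{-z})/2` binomially, `Im (cosh (ξ + iη))^k` is
`2^{-k} ∑_{j=0}^{k} C(k,j) e^{(2j-k)ξ} sin((2j-k)η)`, so its `ξ`-derivative at `0` is
`2^{-k} ∑_{j=0}^{k} g j` with `g j = C(k,j) (k-2j) sin((k-2j)η)`. The term `g` is invariant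
under `j ↦ k - j` and vanishes at `j = k/2`, so this equals `2^{1-k} ∑_{j ≤ (k-1)/2} g j`,
which is exactly minus the `ξ`-derivative of `W_k` at `0`.
-/

open Finset

theorem Finset.sum_range_succ_eq_two_nsmul_sum_range_half {M : Type*} [AddCommMonoid M]
    (k : ℕ) (g : ℕ → M) (hsymm : ∀ j ≤ k, g (k - j) = g j) (hmid : ∀ j, 2 * j = k → g j = 0) :
    ∑ j ∈ range (k + 1), g j = 2 • ∑ j ∈ range ((k - 1) / 2 + 1), g j := by
  rcases Nat.eq_zero_or_pos k with rfl | hk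
  · simp [hmid 0 rfl]
  set h := (k - 1) / 2
  have hupper : ∑ j ∈ Ico (h + 1) (k + 1), g j = ∑ j ∈ Ico 0 (k - h), g j := by
    have hreflect := sum_Ico_reflect g 0 (by omega : k - h ≤ k + 1)
    rw [show k + 1 - (k - h) = h + 1 by omega, Nat.sub_zero] at hreflect
    rw [← hreflect]
    exact sum_congr rfl fun j hj => hsymm j (by simp at hj; omega)
  have hmiddle : ∑ j ∈ Ico (h + 1) (k - h), g j = 0 :=
    sum_eq_zero fun j hj => hmid j (by simp at hj; omega)
  rw [range_eq_Ico, ← sum_Ico_consecutive _ (Nat.zero_le (h + 1)) (by omega : h + 1 ≤ k + 1),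
    hupper, ← sum_Ico_consecutive _ (Nat.zero_le (h + 1)) (by omega : h + 1 ≤ k - h),
    hmiddle, add_zero, two_nsmul, range_eq_Ico]

theorem Complex.cosh_pow_eq_sum (k : ℕ) (z : ℂ) :
    cosh z ^ k = (2 ^ k)⁻¹ * ∑ j ∈ range (k + 1), k.choose j * exp ((2 * j - k) * z) := by
  rw [cosh, div_pow, add_pow, div_eq_inv_mul, mul_sum, mul_sum]
  refine sum_congr rfl fun j hj => ?_
  rw [← exp_nat_mul, ← exp_nat_mul, ← exp_add,
    Nat.cast_sub (Nat.lt_succ_iff.mp (mem_range.mp hj))]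
  ring_nf

theorem Complex.im_cosh_pow_add_I_mul (k : ℕ) (ξ η : ℝ) :
    (cosh (ξ + I * η) ^ k).im = (2 ^ k)⁻¹ * ∑ j ∈ range (k + 1),
      k.choose j * Real.exp ((2 * j - k) * ξ) * Real.sin ((2 * j - k) * η) := by
  have htwo : ((2 : ℂ) ^ k)⁻¹ = (((2 : ℝ) ^ k)⁻¹ : ℝ) := by push_cast; rfl
  rw [cosh_pow_eq_sum, htwo, im_ofReal_mul, im_sum]
  refine congrArg _ (sum_congr rfl fun j _ => ?_)
  have harg : (2 * j - k : ℂ) * (ξ + I * η) =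
      ((2 * j - k) * ξ : ℝ) + ((2 * j - k) * η : ℝ) * I := by
    push_cast; ring
  rw [harg, ← ofReal_natCast, im_ofReal_mul, exp_im]
  simp only [add_re, add_im, ofReal_re, ofReal_im, mul_re, mul_im, I_re, I_im]
  ring_nf

theorem hasDerivAt_sum_mul_exp_mul_mul {ι : Type*} (s : Finset ι) (b a c : ι → ℝ) (x : ℝ) :
    HasDerivAt (fun ξ => ∑ i ∈ s, b i * Real.exp (a i * ξ) * c i)
      (∑ i ∈ s, b i * (Real.exp (a i * x) * a i) * c i) x :=
  HasDerivAt.fun_sum fun i _ => by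
    simpa using ((((hasDerivAt_id' x).const_mul (a i)).exp.const_mul (b i)).mul_const (c i))

noncomputable def normalDerivTerm (k : ℕ) (η : ℝ) (j : ℕ) : ℝ :=
  k.choose j * ((k : ℝ) - 2 * j) * Real.sin (((k : ℝ) - 2 * j) * η)

theorem normalDerivTerm_sub (k : ℕ) (η : ℝ) {j : ℕ} (hj : j ≤ k) :
    normalDerivTerm k η (k - j) = normalDerivTerm k η j := by
  have hm : (k : ℝ) - 2 * ((k - j : ℕ) : ℝ) = -((k : ℝ) - 2 * j) := by
    rw [Nat.cast_sub hj]; ring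
  rw [normalDerivTerm, normalDerivTerm, hm, Nat.choose_symm hj, neg_mul, Real.sin_neg]
  ring

theorem normalDerivTerm_of_two_mul_eq (k : ℕ) (η : ℝ) {j : ℕ} (hj : 2 * j = k) :
    normalDerivTerm k η j = 0 := by
  have hm : (k : ℝ) - 2 * j = 0 := by rw [← hj]; push_cast; ring
  rw [normalDerivTerm, hm, mul_zero, zero_mul]

theorem hasDerivAt_im_cosh_pow (k : ℕ) (η : ℝ) :
    HasDerivAt (fun ξ : ℝ => (Complex.cosh (ξ + Complex.I * η) ^ k).im)
      ((2 ^ k)⁻¹ * ∑ j ∈ range (k + 1), normalDerivTerm k η j) 0 := by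
  simp_rw [Complex.im_cosh_pow_add_I_mul]
  refine ((hasDerivAt_sum_mul_exp_mul_mul _ _ _ _ 0).const_mul _).congr_deriv
    (congrArg _ (sum_congr rfl fun j _ => ?_))
  have hm : (2 * j - k : ℝ) = -((k : ℝ) - 2 * j) := by ring
  rw [normalDerivTerm, hm, mul_zero, Real.exp_zero, neg_mul, Real.sin_neg]
  ring

theorem hasDerivAt_Wk (k : ℕ) (η : ℝ) :
    HasDerivAt (fun ξ => Wk k ξ η)
      (-((2 : ℝ) ^ (1 - (k : ℤ)) * ∑ j ∈ range ((k - 1) / 2 + 1), normalDerivTerm k η j)) 0 := by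
  refine ((hasDerivAt_sum_mul_exp_mul_mul _ _ _ _ 0).const_mul _).congr_deriv ?_
  rw [← mul_neg, ← sum_neg_distrib]
  refine congrArg _ (sum_congr rfl fun j _ => ?_)
  rw [normalDerivTerm, mul_zero, Real.exp_zero]
  ring

theorem neumann_at_zero_general (k : ℕ) (η : ℝ) :
    deriv (fun ξ : ℝ => ((Complex.cosh ((ξ : ℂ) + Complex.I * (η : ℂ))) ^ k).im + Wk k ξ η) 0
      = 0 := by
  rw [((hasDerivAt_im_cosh_pow k η).fun_add (hasDerivAt_Wk k η)).deriv,
    sum_range_succ_eq_two_nsmul_sum_range_half k _ (fun _ => normalDerivTerm_sub k η)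
      (fun _ => normalDerivTerm_of_two_mul_eq k η),
    zpow_sub₀ two_ne_zero, zpow_one, zpow_natCast, nsmul_eq_mul]
  ring

/-- For every integer `k ≥ 1` and every real `η`, the function
`ξ ↦ Im((cosh(ξ+iη))^k) + W_k(ξ,η)` has vanishing derivative at `ξ = 0`
(homogeneous Neumann condition on the line `ξ = 0`). -/
theorem neumann_at_zero (k : ℕ) (hk : 1 ≤ k) (η : ℝ) :
    deriv (fun ξ : ℝ => ((Complex.cosh ((ξ : ℂ) + Complex.I * (η : ℂ))) ^ k).im + Wk k ξ η) 0
      = 0 :=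
  neumann_at_zero_general k η
end

section
/- For every integer k ≥ 1, ∫_0^π W_k(0,η) · (∂W_k/∂ξ)(0,η) dη = −(kπ / 2^{2k-1}) · C(k-1, ⌊(k-1)/2⌋)², where (∂W_k/∂ξ)(0,η) denotes the partial derivative of W_k with respect to its first variable evaluated at (0,η). -/
open Finset Real

theorem integral_cos_intCast_mul (c : ℤ) :
    ∫ η in (0 : ℝ)..π, cos (c * η) = if c = 0 then π else 0 := by
  split_ifs with hc
  · simp [hc]
  · have hc' : (c : ℝ) ≠ 0 := Int.cast_ne_zero.mpr hc
    rw [intervalIntegral.integral_comp_mul_left (fun x => cos x) hc', integral_cos]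
    simp [sin_int_mul_pi]

theorem integral_sin_intCast_mul_mul_sin_intCast_mul {m n : ℤ} (hm : 0 < m) (hn : 0 < n) :
    ∫ η in (0 : ℝ)..π, sin (m * η) * sin (n * η) = if m = n then π / 2 else 0 := by
  have product_to_sum : ∀ η : ℝ, sin (m * η) * sin (n * η)
      = (cos (((m - n : ℤ) : ℝ) * η) - cos (((m + n : ℤ) : ℝ) * η)) / 2 := fun η => by
    push_cast
    rw [sub_mul, add_mul, cos_sub, cos_add]
    ring
  simp_rw [product_to_sum]
  rw [intervalIntegral.integral_div,
    intervalIntegral.integral_sub (Continuous.intervalIntegrable (by fun_prop) _ _)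
      (Continuous.intervalIntegrable (by fun_prop) _ _),
    integral_cos_intCast_mul, integral_cos_intCast_mul, if_neg (show m + n ≠ 0 by omega)]
  by_cases h : m = n
  · simp [h]
  · simp [h, sub_eq_zero]

theorem integral_sum_sin_mul_sum_sin {ι : Type*} (s : Finset ι) (ν : ι → ℤ)
    (hν : ∀ i ∈ s, 0 < ν i) (hinj : Set.InjOn ν s) (a b : ι → ℝ) :
    ∫ η in (0 : ℝ)..π, (∑ i ∈ s, a i * sin (ν i * η)) * (∑ i ∈ s, b i * sin (ν i * η))
      = π / 2 * ∑ i ∈ s, a i * b i := by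
  classical
  have orthogonality : ∀ i ∈ s, ∀ j ∈ s,
      ∫ η in (0 : ℝ)..π, a i * b j * (sin (ν i * η) * sin (ν j * η))
        = if i = j then π / 2 * (a i * b i) else 0 := by
    intro i hi j hj
    rw [intervalIntegral.integral_const_mul,
      integral_sin_intCast_mul_mul_sin_intCast_mul (hν i hi) (hν j hj)]
    by_cases h : i = j
    · simp only [h, if_true]; ring
    · simp [h, hinj.ne hi hj h]
  simp_rw [sum_mul_sum, mul_mul_mul_comm]
  rw [intervalIntegral.integral_finsetSum fun i _ =>
    Continuous.intervalIntegrable (by fun_prop) _ _, mul_sum]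
  refine sum_congr rfl fun i hi => ?_
  rw [intervalIntegral.integral_finsetSum fun j _ =>
    Continuous.intervalIntegrable (by fun_prop) _ _, sum_congr rfl (orthogonality i hi),
    sum_ite_eq s i, if_pos hi]

theorem sub_mul_choose_succ_succ (n j : ℕ) :
    ((n : ℝ) - 2 * j - 1) * (n + 1).choose (j + 1)
      = (n + 1) * (n.choose (j + 1) - n.choose j) := by
  have pascal : ((n + 1).choose (j + 1) : ℝ) = n.choose j + n.choose (j + 1) := by
    exact_mod_cast Nat.choose_succ_succ' n j
  have absorption : ((n : ℝ) + 1) * n.choose j = (n + 1).choose (j + 1) * (j + 1) := by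
    exact_mod_cast Nat.add_one_mul_choose_eq n j
  linear_combination ((n : ℝ) + 1) * pascal + 2 * absorption

theorem sum_range_sub_two_mul_mul_choose_sq (n m : ℕ) :
    ∑ j ∈ range (m + 1), ((n : ℝ) + 1 - 2 * j) * ((n + 1).choose j : ℝ) ^ 2
      = (n + 1) * (n.choose m : ℝ) ^ 2 := by
  induction m with
  | zero => simp
  | succ m ih =>
    have pascal : ((n + 1).choose (m + 1) : ℝ) = n.choose m + n.choose (m + 1) := by
      exact_mod_cast Nat.choose_succ_succ' n m
    rw [sum_range_succ, ih]
    push_cast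
    linear_combination ((n + 1).choose (m + 1) : ℝ) * sub_mul_choose_succ_succ n m
      + ((n : ℝ) + 1) * (n.choose (m + 1) - n.choose m : ℝ) * pascal

theorem Wk_zero (k : ℕ) (η : ℝ) :
    Wk k 0 η = ∑ j ∈ range ((k - 1) / 2 + 1),
      (2 : ℝ) ^ (1 - (k : ℤ)) * k.choose j * sin (((k : ℝ) - 2 * j) * η) := by
  simp [Wk, mul_sum, mul_assoc]

theorem deriv_Wk_zero (k : ℕ) (η : ℝ) :
    deriv (fun ξ : ℝ => Wk k ξ η) 0 = ∑ j ∈ range ((k - 1) / 2 + 1),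
      -((2 : ℝ) ^ (1 - (k : ℤ)) * (k - 2 * j) * k.choose j) * sin (((k : ℝ) - 2 * j) * η) := by
  have hderiv : ∀ j : ℕ,
      HasDerivAt (fun ξ => (k.choose j : ℝ) * exp (-((k : ℝ) - 2 * j) * ξ) * sin ((k - 2 * j) * η))
        (-((k - 2 * j) * k.choose j) * sin (((k : ℝ) - 2 * j) * η)) 0 :=
    fun j => ((((hasDerivAt_id (0 : ℝ)).const_mul _).exp.const_mul _).mul_const _).congr_deriv
      (by simp only [mul_zero, exp_zero, id]; ring)
  unfold Wk
  rw [((HasDerivAt.fun_sum fun j _ => hderiv j).const_mul ((2 : ℝ) ^ (1 - (k : ℤ)))).deriv,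
    mul_sum]
  refine sum_congr rfl fun j _ => ?_
  ring

/-- For every integer `k ≥ 1`,
`∫_0^π W_k(0,η)·(∂W_k/∂ξ)(0,η) dη = −(kπ / 2^{2k-1}) · C(k-1, ⌊(k-1)/2⌋)²`. -/
theorem integral_Wk_mul_partialXi_closed_form (k : ℕ) (hk : 1 ≤ k) :
    ∫ η in (0:ℝ)..Real.pi, Wk k 0 η * deriv (fun ξ : ℝ => Wk k ξ η) 0
      = -((k : ℝ) * Real.pi / 2 ^ (2 * k - 1)) *
          (Nat.choose (k - 1) ((k - 1) / 2) : ℝ) ^ 2 := by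
  have parseval := integral_sum_sin_mul_sum_sin (range ((k - 1) / 2 + 1))
    (fun j => (k : ℤ) - 2 * j) (fun j hj => by simp only [mem_range] at hj; omega)
    (fun i _ j _ h => by simpa using h)
    (fun j => (2 : ℝ) ^ (1 - (k : ℤ)) * k.choose j)
    (fun j => -((2 : ℝ) ^ (1 - (k : ℤ)) * (k - 2 * j) * k.choose j))
  push_cast at parseval
  simp_rw [Wk_zero, deriv_Wk_zero, parseval]
  obtain ⟨n, rfl⟩ := Nat.exists_eq_add_of_le' hk
  simp only [Nat.add_sub_cancel, Nat.cast_add, Nat.cast_one]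
  rw [show (1 : ℤ) - (n + 1) = -n by ring, zpow_neg, zpow_natCast,
    show 2 * (n + 1) - 1 = 2 * n + 1 by omega]
  have summand : ∀ j : ℕ,
      ((2 : ℝ) ^ n)⁻¹ * (n + 1).choose j * -(((2 : ℝ) ^ n)⁻¹ * (n + 1 - 2 * j) * (n + 1).choose j)
        = -((2 ^ n)⁻¹ ^ 2 * ((n + 1 - 2 * j) * (n + 1).choose j ^ 2)) :=
    fun j => by ring
  simp_rw [summand, sum_neg_distrib, ← mul_sum,
    sum_range_sub_two_mul_mul_choose_sq n (n / 2)]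
  field_simp
  ring
end

section
/- Let k ≥ 1 be an integer and define u : ℝ² → ℝ by u(x₁,x₂) = Im((x₁ + i·x₂)^k). Then the sum, over all tuples (i₁,…,i_k) ∈ {1,2}^k, of the squares of the k-th order partial derivatives ∂^k u / (∂x_{i₁} ⋯ ∂x_{i_k}) evaluated at the origin equals (k!)² · 2^{k-1}. -/
-- aux: iterated derivative of z^n is n!
lemma aux_iteratedDeriv_pow (n : ℕ) (x : ℂ) :
    iteratedDeriv n (fun z : ℂ => z ^ n) x = (n.factorial : ℂ) := by
  induction n generalizing x with
  | zero => simp [iteratedDeriv_zero]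
  | succ n ih =>
    rw [iteratedDeriv_succ']
    have hd : deriv (fun z : ℂ => z ^ (n + 1)) = fun z => ((n : ℂ) + 1) * z ^ n := by
      funext z
      simp [deriv_pow]
    rw [hd, ← iteratedDerivWithin_univ,
      iteratedDerivWithin_const_mul (f := fun z : ℂ => z ^ n) (Set.mem_univ x)
        uniqueDiffOn_univ _ ((contDiff_id.pow n).contDiffWithinAt),
      iteratedDerivWithin_univ, ih x, Nat.factorial_succ]
    push_cast
    ring

-- aux: real iterated derivative of a holomorphic function agrees with complex one
lemma aux_restrict (f : ℂ → ℂ) (hf : ContDiff ℂ ⊤ f) (n : ℕ) (x : ℂ) (w : Fin n → ℂ) :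
    iteratedFDeriv ℝ n f x w = iteratedFDeriv ℂ n f x w := by
  have h : HasFTaylorSeriesUpTo (⊤ : ℕ∞) f (ftaylorSeries ℂ f) :=
    contDiff_iff_ftaylorSeries.mp (hf.of_le le_top)
  rw [← hasFTaylorSeriesUpToOn_univ_iff] at h
  have h2 := h.restrictScalars ℝ
  rw [hasFTaylorSeriesUpToOn_univ_iff] at h2
  have h3 := h2.eq_iteratedFDeriv (m := n) (by exact_mod_cast le_top) x
  rw [← h3]
  rfl

/-- The harmonic polynomial `u(x₁,x₂) = Im((x₁ + i·x₂)^k)` on `ℝ²`. -/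
noncomputable def uIm (k : ℕ) (p : ℝ × ℝ) : ℝ :=
  (((p.1 : ℂ) + (p.2 : ℂ) * Complex.I) ^ k).im

-- aux: evaluation of the k-th derivative of uIm at 0
lemma aux_key (k : ℕ) (v : Fin k → ℝ × ℝ) :
    iteratedFDeriv ℝ k (uIm k) 0 v
      = ((k.factorial : ℂ) * ∏ i, (((v i).1 : ℂ) + ((v i).2 : ℂ) * Complex.I)).im := by
  set φC : ℝ × ℝ →L[ℝ] ℂ := Complex.equivRealProdCLM.symm.toContinuousLinearMap with hφC
  have hφ : ∀ p : ℝ × ℝ, φC p = (p.1 : ℂ) + (p.2 : ℂ) * Complex.I := fun p => by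
    rw [hφC, ContinuousLinearEquiv.coe_coe, Complex.equivRealProdCLM_symm_apply]
  have hf : ContDiff ℂ ⊤ (fun z : ℂ => z ^ k) := contDiff_id.pow k
  have hfr : ContDiff ℝ (⊤ : ℕ∞) (⇑Complex.imCLM ∘ fun z : ℂ => z ^ k) :=
    Complex.imCLM.contDiff.comp ((hf.restrict_scalars ℝ).of_le le_top)
  have huIm : uIm k = (⇑Complex.imCLM ∘ fun z : ℂ => z ^ k) ∘ ⇑φC := by
    funext p
    simp [uIm, hφ p, Function.comp]
  rw [huIm, ContinuousLinearMap.iteratedFDeriv_comp_right φC hfr 0 (by exact_mod_cast le_top)]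
  simp only [ContinuousMultilinearMap.compContinuousLinearMap_apply, map_zero]
  rw [ContinuousLinearMap.iteratedFDeriv_comp_left Complex.imCLM ((hf.restrict_scalars ℝ).contDiffAt (x := 0)) le_top]
  simp only [ContinuousLinearMap.compContinuousMultilinearMap_coe, Function.comp_apply,
    Complex.imCLM_apply]
  rw [aux_restrict _ hf]
  have hw : (fun i => φC (v i))
      = fun i => (((v i).1 : ℂ) + ((v i).2 : ℂ) * Complex.I) • (1 : ℂ) := by
    funext i; simp [hφ]
  rw [hw, ContinuousMultilinearMap.map_smul_univ, ← iteratedDeriv_eq_iteratedFDeriv,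
    aux_iteratedDeriv_pow]
  simp [smul_eq_mul, mul_comm]

/-- For `u(x₁,x₂) = Im((x₁+i·x₂)^k)` with `k ≥ 1`, the sum over all tuples
`(i₁,…,i_k) ∈ {1,2}^k` of the squares of the `k`-th order mixed partial derivatives
`∂^k u / (∂x_{i₁} ⋯ ∂x_{i_k})` at the origin equals `(k!)² · 2^{k-1}`. -/
theorem sum_sq_kth_partials_im_pow (k : ℕ) (hk : 1 ≤ k) :
    ∑ σ : Fin k → Fin 2,
        (iteratedFDeriv ℝ k (uIm k) (0 : ℝ × ℝ)
            (fun i => if σ i = 0 then ((1 : ℝ), (0 : ℝ)) else ((0 : ℝ), (1 : ℝ)))) ^ 2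
      = (Nat.factorial k : ℝ) ^ 2 * 2 ^ (k - 1) := by
  have hterm : ∀ σ : Fin k → Fin 2,
      (iteratedFDeriv ℝ k (uIm k) (0 : ℝ × ℝ)
            (fun i => if σ i = 0 then ((1 : ℝ), (0 : ℝ)) else ((0 : ℝ), (1 : ℝ)))) ^ 2
        = (Nat.factorial k : ℝ) ^ 2
            * (1 - ∏ i, (if σ i = 0 then (1 : ℝ) else -1)) / 2 := by
    intro σ
    rw [aux_key]
    set P : ℂ := ∏ i, (((if σ i = 0 then ((1:ℝ),(0:ℝ)) else ((0:ℝ),(1:ℝ))).1 : ℂ)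
        + (((if σ i = 0 then ((1:ℝ),(0:ℝ)) else ((0:ℝ),(1:ℝ)))).2 : ℂ) * Complex.I) with hP
    have hPc : P = ∏ i, (if σ i = 0 then (1 : ℂ) else Complex.I) := by
      rw [hP]
      refine Finset.prod_congr rfl fun i _ => ?_
      by_cases h : σ i = 0 <;> simp [h]
    have him : ((k.factorial : ℂ) * P).im = (k.factorial : ℝ) * P.im := by
      simp [Complex.mul_im]
    rw [him, mul_pow]
    have hsq : P.im ^ 2 = (Complex.normSq P - (P * P).re) / 2 := by
      rw [Complex.mul_re, Complex.normSq_apply]; ring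
    have hns : Complex.normSq P = 1 := by
      rw [hPc, map_prod]
      refine Finset.prod_eq_one fun i _ => ?_
      by_cases h : σ i = 0 <;> simp [h]
    have hPP : P * P = (((∏ i, (if σ i = 0 then (1 : ℝ) else -1)) : ℝ) : ℂ) := by
      rw [hPc, ← Finset.prod_mul_distrib, Complex.ofReal_prod]
      refine Finset.prod_congr rfl fun i _ => ?_
      by_cases h : σ i = 0 <;> simp [h, Complex.I_mul_I]
    rw [hsq, hns, hPP, Complex.ofReal_re]
    ring
  simp_rw [hterm]
  have hsum : ∑ σ : Fin k → Fin 2, (1 - ∏ i, (if σ i = 0 then (1 : ℝ) else -1))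
      = 2 ^ k := by
    rw [Finset.sum_sub_distrib, Finset.sum_const, ← Fintype.sum_pow (fun j : Fin 2 => if j = 0 then (1:ℝ) else -1) k]
    simp [Fin.sum_univ_two, zero_pow (by omega : k ≠ 0), Fintype.card_fun]
  calc ∑ σ : Fin k → Fin 2, (Nat.factorial k : ℝ) ^ 2
          * (1 - ∏ i, (if σ i = 0 then (1 : ℝ) else -1)) / 2
      = (Nat.factorial k : ℝ) ^ 2 / 2
          * ∑ σ : Fin k → Fin 2, (1 - ∏ i, (if σ i = 0 then (1 : ℝ) else -1)) := by
        rw [Finset.mul_sum]; exact Finset.sum_congr rfl fun σ _ => by ring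
    _ = (Nat.factorial k : ℝ) ^ 2 / 2 * 2 ^ k := by rw [hsum]
    _ = (Nat.factorial k : ℝ) ^ 2 * 2 ^ (k - 1) := by
        rw [show (2:ℝ) ^ k = 2 * 2 ^ (k - 1) from by
          rw [← pow_succ', Nat.sub_add_cancel hk]]
        ring
end

section
/- Let k ≥ 1 be an integer, let 0 < a < b, and let U ⊆ ℝ² be an open set containing the closed upper half-annulus {x = (x₁,x₂) ∈ ℝ² : a < |x| < b, x₂ ≥ 0}. Suppose u : ℝ² → ℝ is twice continuously differentiable on U, harmonic on U (i.e. ∂²u/∂x₁² + ∂²u/∂x₂² = 0 on U), and satisfies u(x₁,0) = 0 whenever a < |x₁| < b. Then the function ξ(r) := ∫_0^π u(r cos t, r sin t)·sin(kt) dt satisfies the ordinary differential equation ξ''(r) + ξ'(r)/r − k²·ξ(r)/r² = 0 for all r ∈ (a,b). -/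
/-!
Write `g(r, θ) = u(r cos θ, r sin θ)`. By the chain rule,
`r² ∂²ᵣg + r ∂ᵣg + ∂²_θ g = r² (Δu)(r cos θ, r sin θ) = 0`.
Differentiating `ξ(r) = ∫₀^π g(r, θ) sin(kθ) dθ` twice under the integral sign gives `ξ'` and `ξ''`
as the sine coefficients of `∂ᵣg` and `∂²ᵣg`, while integrating `∂²_θ g · sin(kθ)` by parts twice
gives `-k² ξ`: the boundary terms vanish because `g(r, 0) = g(r, π) = 0` and
`sin 0 = sin (kπ) = 0`. Hence `r² ξ'' + r ξ' - k² ξ = 0`.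
-/

open Set Filter Topology MeasureTheory Real

theorem fderiv_clm_apply_const_apply {𝕜 E F G : Type*} [NontriviallyNormedField 𝕜]
    [NormedAddCommGroup E] [NormedSpace 𝕜 E] [NormedAddCommGroup F] [NormedSpace 𝕜 F]
    [NormedAddCommGroup G] [NormedSpace 𝕜 G] {f : E → F →L[𝕜] G} {x : E}
    (hf : DifferentiableAt 𝕜 f x) (v : F) (w : E) :
    fderiv 𝕜 (fun y => f y v) x w = fderiv 𝕜 f x w v := by
  simp [fderiv_clm_apply hf (differentiableAt_const v)]

section ParametricIntegral

variable {E : Type*} [NormedAddCommGroup E] [NormedSpace ℝ E]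

theorem hasDerivAt_intervalIntegral_of_continuousOn {I : Set ℝ} (hI : IsOpen I)
    {F F' : ℝ × ℝ → E} {α β r₀ : ℝ}
    (hF : ContinuousOn F (I ×ˢ uIcc α β)) (hF' : ContinuousOn F' (I ×ˢ uIcc α β))
    (hd : ∀ ρ ∈ I, ∀ t ∈ uIcc α β, HasDerivAt (fun s => F (s, t)) (F' (ρ, t)) ρ) (hr₀ : r₀ ∈ I) :
    HasDerivAt (fun ρ => ∫ t in α..β, F (ρ, t)) (∫ t in α..β, F' (r₀, t)) r₀ := by
  obtain ⟨δ, hδ, hδI⟩ := Metric.nhds_basis_closedBall.mem_iff.1 (hI.mem_nhds hr₀)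
  have hK : Metric.closedBall r₀ δ ×ˢ uIcc α β ⊆ I ×ˢ uIcc α β := prod_mono hδI le_rfl
  obtain ⟨C, hC⟩ := ((isCompact_closedBall r₀ δ).prod isCompact_uIcc).exists_bound_of_continuousOn
    (hF'.mono hK)
  have hslice : ∀ {G : ℝ × ℝ → E}, ContinuousOn G (I ×ˢ uIcc α β) → ∀ ρ ∈ I,
      AEStronglyMeasurable (fun t => G (ρ, t)) (volume.restrict (uIoc α β)) :=
    fun hG ρ hρ => ((hG.comp (by fun_prop) fun t ht => ⟨hρ, ht⟩).mono uIoc_subset_uIcc)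
      |>.aestronglyMeasurable measurableSet_uIoc
  have hball : Metric.ball r₀ δ ⊆ I := Metric.ball_subset_closedBall.trans hδI
  refine (intervalIntegral.hasDerivAt_integral_of_dominated_loc_of_deriv_le
    (F := fun ρ t => F (ρ, t)) (F' := fun ρ t => F' (ρ, t)) (bound := fun _ => C)
    (Metric.ball_mem_nhds r₀ hδ) ?_ ?_ (hslice hF' r₀ hr₀) ?_ intervalIntegrable_const ?_).2
  · filter_upwards [Metric.ball_mem_nhds r₀ hδ] with ρ hρ using hslice hF ρ (hball hρ)
  · exact (hF.comp (by fun_prop) fun t ht => ⟨hr₀, ht⟩).intervalIntegrable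
  · exact ae_of_all _ fun t ht ρ hρ =>
      hC _ ⟨Metric.ball_subset_closedBall hρ, uIoc_subset_uIcc ht⟩
  · exact ae_of_all _ fun t ht ρ hρ => hd ρ (hball hρ) t (uIoc_subset_uIcc ht)

end ParametricIntegral

theorem integral_deriv_deriv_mul_sin {h h' h'' : ℝ → ℝ} (k : ℕ)
    (hh : ∀ t ∈ uIcc 0 π, HasDerivAt h (h' t) t) (hh' : ∀ t ∈ uIcc 0 π, HasDerivAt h' (h'' t) t)
    (hh'' : IntervalIntegrable h'' volume 0 π) (h0 : h 0 = 0) (hπ : h π = 0) :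
    ∫ t in 0..π, h'' t * sin (k * t) = -(k ^ 2 * ∫ t in 0..π, h t * sin (k * t)) := by
  have hsin : ∀ t, HasDerivAt (fun t => sin (k * t)) (k * cos (k * t)) t := fun t => by
    simpa [mul_comm] using ((hasDerivAt_id t).const_mul (k : ℝ)).sin
  have hcos : ∀ t, HasDerivAt (fun t => k * cos (k * t)) (-(k ^ 2 * sin (k * t))) t := fun t =>
    (((hasDerivAt_id t).const_mul (k : ℝ)).cos.const_mul (k : ℝ)).congr_deriv (by simp; ring)
  have hh'_int : IntervalIntegrable h' volume 0 π :=
    ContinuousOn.intervalIntegrable fun t ht => (hh' t ht).continuousAt.continuousWithinAt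
  calc ∫ t in 0..π, h'' t * sin (k * t) = ∫ t in 0..π, sin (k * t) * h'' t := by
        simp_rw [mul_comm (h'' _)]
    _ = -∫ t in 0..π, k * cos (k * t) * h' t := by
        rw [intervalIntegral.integral_mul_deriv_eq_deriv_mul (fun t _ => hsin t) hh'
          ((by fun_prop : Continuous _).intervalIntegrable _ _) hh'']
        simp [sin_nat_mul_pi]
    _ = -(k ^ 2 * ∫ t in 0..π, h t * sin (k * t)) := by
        rw [intervalIntegral.integral_mul_deriv_eq_deriv_mul (fun t _ => hcos t) hh
          ((by fun_prop : Continuous _).intervalIntegrable _ _) hh'_int]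
        simp [h0, hπ, ← intervalIntegral.integral_const_mul, mul_comm (h _), mul_assoc]

theorem sine_coeff_ode_of_polar_pde {a b r : ℝ} {g g₁ g₁₁ g₂ g₂₂ : ℝ × ℝ → ℝ} (k : ℕ)
    (hg : ContinuousOn g (Ioo a b ×ˢ Icc 0 π)) (hg₁ : ContinuousOn g₁ (Ioo a b ×ˢ Icc 0 π))
    (hg₁₁ : ContinuousOn g₁₁ (Ioo a b ×ˢ Icc 0 π)) (hg₂₂ : ContinuousOn g₂₂ (Ioo a b ×ˢ Icc 0 π))
    (hg_r : ∀ ρ ∈ Ioo a b, ∀ θ ∈ Icc 0 π, HasDerivAt (fun s => g (s, θ)) (g₁ (ρ, θ)) ρ)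
    (hg₁_r : ∀ ρ ∈ Ioo a b, ∀ θ ∈ Icc 0 π, HasDerivAt (fun s => g₁ (s, θ)) (g₁₁ (ρ, θ)) ρ)
    (hg_θ : ∀ ρ ∈ Ioo a b, ∀ θ ∈ Icc 0 π, HasDerivAt (fun s => g (ρ, s)) (g₂ (ρ, θ)) θ)
    (hg₂_θ : ∀ ρ ∈ Ioo a b, ∀ θ ∈ Icc 0 π, HasDerivAt (fun s => g₂ (ρ, s)) (g₂₂ (ρ, θ)) θ)
    (hpde : ∀ ρ ∈ Ioo a b, ∀ θ ∈ Icc 0 π,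
      ρ ^ 2 * g₁₁ (ρ, θ) + g₂₂ (ρ, θ) + ρ * g₁ (ρ, θ) = 0)
    (hr : r ∈ Ioo a b) (hr₀ : r ≠ 0) (h0 : g (r, 0) = 0) (hπ : g (r, π) = 0) :
    let ξ := fun ρ => ∫ t in 0..π, g (ρ, t) * sin (k * t)
    deriv (deriv ξ) r + deriv ξ r / r - k ^ 2 * ξ r / r ^ 2 = 0 := by
  intro ξ
  rw [← uIcc_of_le pi_pos.le] at *
  have hw : Continuous fun q : ℝ × ℝ => sin (k * q.2) := by fun_prop
  have hmul : ∀ {G : ℝ × ℝ → ℝ}, ContinuousOn G (Ioo a b ×ˢ uIcc 0 π) →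
      ContinuousOn (fun q => G q * sin (k * q.2)) (Ioo a b ×ˢ uIcc 0 π) :=
    fun hG => hG.mul hw.continuousOn
  have hslice : ∀ {G : ℝ × ℝ → ℝ}, ContinuousOn G (Ioo a b ×ˢ uIcc 0 π) →
      IntervalIntegrable (fun t => G (r, t) * sin (k * t)) volume 0 π :=
    fun hG => ((hmul hG).comp (by fun_prop) fun t ht => ⟨hr, ht⟩).intervalIntegrable
  have hξ : ∀ ρ ∈ Ioo a b, HasDerivAt ξ (∫ t in 0..π, g₁ (ρ, t) * sin (k * t)) ρ :=
    fun ρ hρ => hasDerivAt_intervalIntegral_of_continuousOn isOpen_Ioo (hmul hg)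
      (hmul hg₁) (fun ρ hρ θ hθ => (hg_r ρ hρ θ hθ).mul_const (sin (k * θ))) hρ
  have hξ' : HasDerivAt (fun ρ => ∫ t in 0..π, g₁ (ρ, t) * sin (k * t))
      (∫ t in 0..π, g₁₁ (r, t) * sin (k * t)) r :=
    hasDerivAt_intervalIntegral_of_continuousOn isOpen_Ioo (hmul hg₁)
      (hmul hg₁₁) (fun ρ hρ θ hθ => (hg₁_r ρ hρ θ hθ).mul_const (sin (k * θ))) hr
  have hderiv2 : deriv (deriv ξ) r = ∫ t in 0..π, g₁₁ (r, t) * sin (k * t) := by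
    rw [Filter.EventuallyEq.deriv_eq (f := fun ρ => ∫ t in 0..π, g₁ (ρ, t) * sin (k * t))]
    · exact hξ'.deriv
    · filter_upwards [isOpen_Ioo.mem_nhds hr] with ρ hρ using (hξ ρ hρ).deriv
  have hθ : ∫ t in 0..π, g₂₂ (r, t) * sin (k * t) = -(k ^ 2 * ξ r) :=
    integral_deriv_deriv_mul_sin k (hg_θ r hr) (hg₂_θ r hr)
      ((hg₂₂.comp (by fun_prop) fun t ht => ⟨hr, ht⟩).intervalIntegrable) h0 hπ
  have hpde_int : r ^ 2 * (∫ t in 0..π, g₁₁ (r, t) * sin (k * t))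
      + (∫ t in 0..π, g₂₂ (r, t) * sin (k * t))
      + r * (∫ t in 0..π, g₁ (r, t) * sin (k * t)) = 0 := by
    rw [← intervalIntegral.integral_const_mul, ← intervalIntegral.integral_const_mul,
      ← intervalIntegral.integral_add, ← intervalIntegral.integral_add]
    · refine (intervalIntegral.integral_congr fun t ht => ?_).trans intervalIntegral.integral_zero
      linear_combination sin (k * t) * hpde r hr t ht
    exacts [((hslice hg₁₁).const_mul _).add (hslice hg₂₂), (hslice hg₁).const_mul _,
      (hslice hg₁₁).const_mul _, hslice hg₂₂]
  rw [hderiv2, (hξ r hr).deriv]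
  field_simp
  linear_combination hpde_int - hθ

section PolarDerivatives

/- The chain-rule expressions for `∂ᵣ`, `∂²ᵣ`, `∂_θ`, `∂²_θ` of `u ∘ polarCoord.symm`. The last
term of `polarDerivθθ` comes from `∂_θ (-r sin θ, r cos θ) = -(r cos θ, r sin θ)`. -/
noncomputable def polarDerivR (u : ℝ × ℝ → ℝ) (p : ℝ × ℝ) : ℝ :=
  fderiv ℝ u (polarCoord.symm p) (cos p.2, sin p.2)

noncomputable def polarDerivRR (u : ℝ × ℝ → ℝ) (p : ℝ × ℝ) : ℝ :=
  fderiv ℝ (fderiv ℝ u) (polarCoord.symm p) (cos p.2, sin p.2) (cos p.2, sin p.2)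

noncomputable def polarDerivθ (u : ℝ × ℝ → ℝ) (p : ℝ × ℝ) : ℝ :=
  fderiv ℝ u (polarCoord.symm p) (-(p.1 * sin p.2), p.1 * cos p.2)

noncomputable def polarDerivθθ (u : ℝ × ℝ → ℝ) (p : ℝ × ℝ) : ℝ :=
  fderiv ℝ (fderiv ℝ u) (polarCoord.symm p) (-(p.1 * sin p.2), p.1 * cos p.2)
      (-(p.1 * sin p.2), p.1 * cos p.2)
    - fderiv ℝ u (polarCoord.symm p) (polarCoord.symm p)

theorem sqrt_sq_add_sq_polarCoord_symm (p : ℝ × ℝ) :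
    √((polarCoord.symm p).1 ^ 2 + (polarCoord.symm p).2 ^ 2) = |p.1| := by
  rw [polarCoord_symm_apply, ← sqrt_sq_eq_abs]
  congr 1
  linear_combination p.1 ^ 2 * sin_sq_add_cos_sq p.2

theorem hasDerivAt_polarCoord_symm_fst (r θ : ℝ) :
    HasDerivAt (fun s => polarCoord.symm (s, θ)) (cos θ, sin θ) r := by
  simp only [polarCoord_symm_apply]
  simpa using ((hasDerivAt_id r).mul_const (cos θ)).prodMk ((hasDerivAt_id r).mul_const (sin θ))

theorem hasDerivAt_polarCoord_symm_snd (r θ : ℝ) :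
    HasDerivAt (fun s => polarCoord.symm (r, s)) (-(r * sin θ), r * cos θ) θ := by
  simp only [polarCoord_symm_apply]
  simpa using ((hasDerivAt_cos θ).const_mul r).prodMk ((hasDerivAt_sin θ).const_mul r)

theorem polar_laplacian (u : ℝ × ℝ → ℝ) (r θ : ℝ) :
    r ^ 2 * polarDerivRR u (r, θ) + polarDerivθθ u (r, θ) + r * polarDerivR u (r, θ) =
      r ^ 2 * (fderiv ℝ (fderiv ℝ u) (polarCoord.symm (r, θ)) (1, 0) (1, 0)
        + fderiv ℝ (fderiv ℝ u) (polarCoord.symm (r, θ)) (0, 1) (0, 1)) := by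
  simp only [polarDerivRR, polarDerivθθ, polarDerivR, polarCoord_symm_apply]
  generalize fderiv ℝ (fderiv ℝ u) (r * cos θ, r * sin θ) = B
  generalize fderiv ℝ u (r * cos θ, r * sin θ) = L
  have hxy : ∀ x y : ℝ, ((x, y) : ℝ × ℝ) = x • ((1 : ℝ), (0 : ℝ)) + y • ((0 : ℝ), (1 : ℝ)) := by
    simp
  rw [hxy (cos θ), hxy (-(r * sin θ)), hxy (r * cos θ)]
  simp only [map_add, map_smul, add_apply, smul_apply, smul_eq_mul]
  linear_combination r ^ 2 * (B (1, 0) (1, 0) + B (0, 1) (0, 1)) * sin_sq_add_cos_sq θ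

variable {u : ℝ × ℝ → ℝ} {r θ : ℝ}

theorem hasDerivAt_comp_polarCoord_symm_fst (hu : DifferentiableAt ℝ u (polarCoord.symm (r, θ))) :
    HasDerivAt (fun s => u (polarCoord.symm (s, θ))) (polarDerivR u (r, θ)) r :=
  hu.hasFDerivAt.comp_hasDerivAt r (hasDerivAt_polarCoord_symm_fst r θ)

theorem hasDerivAt_comp_polarCoord_symm_snd (hu : DifferentiableAt ℝ u (polarCoord.symm (r, θ))) :
    HasDerivAt (fun s => u (polarCoord.symm (r, s))) (polarDerivθ u (r, θ)) θ :=
  hu.hasFDerivAt.comp_hasDerivAt θ (hasDerivAt_polarCoord_symm_snd r θ)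

theorem hasDerivAt_polarDerivR_fst
    (hu : DifferentiableAt ℝ (fderiv ℝ u) (polarCoord.symm (r, θ))) :
    HasDerivAt (fun s => polarDerivR u (s, θ)) (polarDerivRR u (r, θ)) r := by
  have h := hu.hasFDerivAt.comp_hasDerivAt r (hasDerivAt_polarCoord_symm_fst r θ)
  replace h := h.clm_apply (hasDerivAt_const r ((cos θ, sin θ) : ℝ × ℝ))
  simpa [polarDerivR, polarDerivRR, Function.comp_def] using h

theorem hasDerivAt_polarDerivθ_snd
    (hu : DifferentiableAt ℝ (fderiv ℝ u) (polarCoord.symm (r, θ))) :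
    HasDerivAt (fun s => polarDerivθ u (r, s)) (polarDerivθθ u (r, θ)) θ := by
  have hdir : HasDerivAt (fun s => ((-(r * sin s), r * cos s) : ℝ × ℝ))
      (-polarCoord.symm (r, θ)) θ := by
    simpa [mul_neg] using ((hasDerivAt_sin θ).const_mul r).neg.prodMk
      ((hasDerivAt_cos θ).const_mul r)
  have h := hu.hasFDerivAt.comp_hasDerivAt θ (hasDerivAt_polarCoord_symm_snd r θ)
  replace h := h.clm_apply hdir
  rw [map_neg] at h
  simpa [polarDerivθ, polarDerivθθ, Function.comp_def, sub_eq_add_neg] using h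

variable {U : Set (ℝ × ℝ)}

theorem continuousOn_polarDerivR (h : ContinuousOn (fderiv ℝ u) U) :
    ContinuousOn (polarDerivR u) (polarCoord.symm ⁻¹' U) :=
  (h.comp continuous_polarCoord_symm.continuousOn (mapsTo_preimage _ _)).clm_apply
    (by fun_prop)

theorem continuousOn_polarDerivRR (h : ContinuousOn (fderiv ℝ (fderiv ℝ u)) U) :
    ContinuousOn (polarDerivRR u) (polarCoord.symm ⁻¹' U) :=
  ((h.comp continuous_polarCoord_symm.continuousOn (mapsTo_preimage _ _)).clm_apply
    (by fun_prop)).clm_apply (by fun_prop)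

theorem continuousOn_polarDerivθθ (h₁ : ContinuousOn (fderiv ℝ u) U)
    (h₂ : ContinuousOn (fderiv ℝ (fderiv ℝ u)) U) :
    ContinuousOn (polarDerivθθ u) (polarCoord.symm ⁻¹' U) :=
  (((h₂.comp continuous_polarCoord_symm.continuousOn (mapsTo_preimage _ _)).clm_apply
    (by fun_prop)).clm_apply (by fun_prop)).sub
    ((h₁.comp continuous_polarCoord_symm.continuousOn (mapsTo_preimage _ _)).clm_apply
      continuous_polarCoord_symm.continuousOn)

end PolarDerivatives

theorem sine_coeff_ode_of_laplace_eq_zero {U : Set (ℝ × ℝ)} (hU : IsOpen U) {u : ℝ × ℝ → ℝ}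
    (hreg : ContDiffOn ℝ 2 u U)
    (hΔ : ∀ x ∈ U, fderiv ℝ (fun y => fderiv ℝ u y (1, 0)) x (1, 0)
      + fderiv ℝ (fun y => fderiv ℝ u y (0, 1)) x (0, 1) = 0)
    {a b r : ℝ} (hS : Ioo a b ×ˢ Icc 0 π ⊆ polarCoord.symm ⁻¹' U) (k : ℕ) (hr : r ∈ Ioo a b)
    (hr₀ : r ≠ 0) (h0 : u (polarCoord.symm (r, 0)) = 0) (hπ : u (polarCoord.symm (r, π)) = 0) :
    let ξ := fun ρ => ∫ t in 0..π, u (polarCoord.symm (ρ, t)) * sin (k * t)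
    deriv (deriv ξ) r + deriv ξ r / r - k ^ 2 * ξ r / r ^ 2 = 0 := by
  have hdu : ContDiffOn ℝ 1 (fderiv ℝ u) U := hreg.fderiv_of_isOpen hU (by norm_num)
  have hu₁ : ∀ x ∈ U, DifferentiableAt ℝ u x := fun x hx =>
    (hreg.differentiableOn (by norm_num) x hx).differentiableAt (hU.mem_nhds hx)
  have hu₂ : ∀ x ∈ U, DifferentiableAt ℝ (fderiv ℝ u) x := fun x hx =>
    (hdu.differentiableOn one_ne_zero x hx).differentiableAt (hU.mem_nhds hx)
  have hdu₁ := hdu.continuousOn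
  have hdu₂ := hdu.continuousOn_fderiv_of_isOpen hU le_rfl
  refine sine_coeff_ode_of_polar_pde k (g₂ := polarDerivθ u)
    ((hreg.continuousOn.comp continuous_polarCoord_symm.continuousOn (mapsTo_preimage _ _)).mono hS)
    ((continuousOn_polarDerivR hdu₁).mono hS) ((continuousOn_polarDerivRR hdu₂).mono hS)
    ((continuousOn_polarDerivθθ hdu₁ hdu₂).mono hS)
    (fun ρ hρ θ hθ => hasDerivAt_comp_polarCoord_symm_fst (hu₁ _ (hS ⟨hρ, hθ⟩)))
    (fun ρ hρ θ hθ => hasDerivAt_polarDerivR_fst (hu₂ _ (hS ⟨hρ, hθ⟩)))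
    (fun ρ hρ θ hθ => hasDerivAt_comp_polarCoord_symm_snd (hu₁ _ (hS ⟨hρ, hθ⟩)))
    (fun ρ hρ θ hθ => hasDerivAt_polarDerivθ_snd (hu₂ _ (hS ⟨hρ, hθ⟩)))
    (fun ρ hρ θ hθ => ?_) hr hr₀ h0 hπ
  have hx : polarCoord.symm (ρ, θ) ∈ U := hS ⟨hρ, hθ⟩
  rw [polar_laplacian, ← fderiv_clm_apply_const_apply (hu₂ _ hx),
    ← fderiv_clm_apply_const_apply (hu₂ _ hx), hΔ _ hx, mul_zero]

theorem fourier_coeff_ode_general (k : ℕ) (a b : ℝ) (ha : 0 < a)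
    (U : Set (ℝ × ℝ)) (hU : IsOpen U)
    (hsub : {x : ℝ × ℝ |
        a < Real.sqrt (x.1 ^ 2 + x.2 ^ 2) ∧ Real.sqrt (x.1 ^ 2 + x.2 ^ 2) < b ∧ 0 ≤ x.2} ⊆ U)
    (u : ℝ × ℝ → ℝ) (hreg : ContDiffOn ℝ 2 u U)
    (hharm : ∀ x ∈ U,
      fderiv ℝ (fun y : ℝ × ℝ => fderiv ℝ u y (1, 0)) x (1, 0)
        + fderiv ℝ (fun y : ℝ × ℝ => fderiv ℝ u y (0, 1)) x (0, 1) = 0)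
    (hbd : ∀ x₁ : ℝ, a < |x₁| → |x₁| < b → u (x₁, 0) = 0)
    (ξ : ℝ → ℝ)
    (hξ : ∀ r : ℝ,
      ξ r = ∫ t in (0:ℝ)..Real.pi,
        u (r * Real.cos t, r * Real.sin t) * Real.sin ((k : ℝ) * t)) :
    ∀ r : ℝ, a < r → r < b →
      deriv (deriv ξ) r + deriv ξ r / r - (k : ℝ) ^ 2 * ξ r / r ^ 2 = 0 := by
  intro r har hbr
  have hr : 0 < r := ha.trans har
  have hS : Ioo a b ×ˢ Icc 0 π ⊆ polarCoord.symm ⁻¹' U := by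
    rintro ⟨ρ, θ⟩ ⟨⟨haρ, hρb⟩, hθ⟩
    have hρ : |ρ| = ρ := abs_of_pos (ha.trans haρ)
    refine hsub ⟨?_, ?_, ?_⟩
    · rwa [sqrt_sq_add_sq_polarCoord_symm, hρ]
    · rwa [sqrt_sq_add_sq_polarCoord_symm, hρ]
    · exact mul_nonneg (ha.trans haρ).le (sin_nonneg_of_nonneg_of_le_pi hθ.1 hθ.2)
  obtain rfl : ξ = fun ρ => ∫ t in 0..π, u (polarCoord.symm (ρ, t)) * sin (k * t) :=
    funext fun ρ => by simp [hξ]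
  refine sine_coeff_ode_of_laplace_eq_zero hU hreg hharm hS k ⟨har, hbr⟩ hr.ne' ?_ ?_
  · simpa using hbd r (by rwa [abs_of_pos hr]) (by rwa [abs_of_pos hr])
  · simpa using hbd (-r) (by rwa [abs_neg, abs_of_pos hr]) (by rwa [abs_neg, abs_of_pos hr])

/-- Let `k ≥ 1`, `0 < a < b`, and let `U ⊆ ℝ²` be open and contain the closed upper
half-annulus `{a < |x| < b, x₂ ≥ 0}`. If `u` is `C²` on `U`, harmonic on `U`, and
vanishes on the two boundary segments `{(x₁,0) : a < |x₁| < b}`, then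
`ξ(r) = ∫_0^π u(r cos t, r sin t)·sin(kt) dt` satisfies
`ξ'' + ξ'/r − k²ξ/r² = 0` on `(a,b)`. -/
theorem fourier_coeff_ode (k : ℕ) (hk : 1 ≤ k) (a b : ℝ) (ha : 0 < a) (hab : a < b)
    (U : Set (ℝ × ℝ)) (hU : IsOpen U)
    (hsub : {x : ℝ × ℝ |
        a < Real.sqrt (x.1 ^ 2 + x.2 ^ 2) ∧ Real.sqrt (x.1 ^ 2 + x.2 ^ 2) < b ∧ 0 ≤ x.2} ⊆ U)
    (u : ℝ × ℝ → ℝ) (hreg : ContDiffOn ℝ 2 u U)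
    (hharm : ∀ x ∈ U,
      fderiv ℝ (fun y : ℝ × ℝ => fderiv ℝ u y (1, 0)) x (1, 0)
        + fderiv ℝ (fun y : ℝ × ℝ => fderiv ℝ u y (0, 1)) x (0, 1) = 0)
    (hbd : ∀ x₁ : ℝ, a < |x₁| → |x₁| < b → u (x₁, 0) = 0)
    (ξ : ℝ → ℝ)
    (hξ : ∀ r : ℝ,
      ξ r = ∫ t in (0:ℝ)..Real.pi,
        u (r * Real.cos t, r * Real.sin t) * Real.sin ((k : ℝ) * t)) :
    ∀ r : ℝ, a < r → r < b →
      deriv (deriv ξ) r + deriv ξ r / r - (k : ℝ) ^ 2 * ξ r / r ^ 2 = 0 :=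
  fourier_coeff_ode_general k a b ha U hU hsub u hreg hharm hbd ξ hξ
end
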